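/- arXiv:1702.03619 — 3 statements merged into one kernel-verified Lean document; each statement's English description precedes it below -/
import Mathlib

section
/- Let M ≥ 2, A ⊂ ℤ_M, δ = log|A|/log M, k ≥ 1, and C_k the discrete Cantor set. Then for all integers k' ∈ [0,k] and j' ∈ ℤ: #(C_k ∩ [j'M^{k'}, (j'+1)M^{k'})) equals |A|^{k'} if j' ∈ C_{k−k'}, and equals 0 otherwise. -/
def Cantor (M : ℕ) (A : Finset ℕ) (k : ℕ) : Set ℤ :=
  {m | ∃ a : Fin k → ℕ, (∀ j, a j ∈ A) ∧ m = ∑ j, (a j : ℤ) * (M : ℤ) ^ (j : ℕ)}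

lemma digits_bound (M : ℕ) (hM : 2 ≤ M) (n : ℕ) (a : Fin n → ℕ) (ha : ∀ j, a j < M) :
    0 ≤ ∑ j, (a j : ℤ) * (M : ℤ) ^ (j : ℕ) ∧
      ∑ j, (a j : ℤ) * (M : ℤ) ^ (j : ℕ) < (M : ℤ) ^ n := by
  induction n with
  | zero => constructor <;> simp
  | succ n ih =>
    rw [Fin.sum_univ_succ]
    obtain ⟨h0, h1⟩ := ih (fun j => a j.succ) (fun j => ha j.succ)
    have hM' : (2:ℤ) ≤ M := by exact_mod_cast hM
    have ha0 : (a 0 : ℤ) ≤ (M:ℤ) - 1 := by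
      have := ha 0; omega
    constructor
    · have : (0:ℤ) ≤ ∑ j : Fin n, (a j.succ : ℤ) * (M:ℤ) ^ ((j:ℕ)+1) := by
        apply Finset.sum_nonneg; intro j _; positivity
      simp only [Fin.val_succ] at this ⊢
      positivity
    · have heq : ∑ j : Fin n, (a j.succ : ℤ) * (M:ℤ) ^ ((j.succ:ℕ)) =
          (M:ℤ) * ∑ j : Fin n, (a j.succ : ℤ) * (M:ℤ) ^ (j:ℕ) := by
        rw [Finset.mul_sum]; apply Finset.sum_congr rfl; intro j _
        simp [Fin.val_succ, pow_succ]; ring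
      rw [heq]
      rw [pow_succ]
      have h2 : (∑ j : Fin n, (a j.succ : ℤ) * (M:ℤ) ^ (j:ℕ)) + 1 ≤ (M:ℤ)^n := by omega
      have h3 : (M:ℤ) * ((∑ j : Fin n, (a j.succ : ℤ) * (M:ℤ) ^ (j:ℕ)) + 1) ≤ (M:ℤ) * (M:ℤ)^n :=
        mul_le_mul_of_nonneg_left h2 (by positivity)
      have h4 : (M:ℤ) * (M:ℤ)^n = (M:ℤ)^n * (M:ℤ) := mul_comm _ _
      simp only [Fin.val_zero, pow_zero, mul_one]
      nlinarith

lemma digits_inj (M : ℕ) (hM : 2 ≤ M) : ∀ (n : ℕ) (a b : Fin n → ℕ),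
    (∀ j, a j < M) → (∀ j, b j < M) →
    ∑ j, (a j : ℤ) * (M : ℤ) ^ (j : ℕ) = ∑ j, (b j : ℤ) * (M : ℤ) ^ (j : ℕ) → a = b := by
  intro n
  induction n with
  | zero => intro a b _ _ _; funext j; exact absurd j.2 (by omega)
  | succ n ih =>
    intro a b ha hb hsum
    rw [Fin.sum_univ_succ, Fin.sum_univ_succ] at hsum
    have heq : ∀ c : Fin (n+1) → ℕ, ∑ j : Fin n, (c j.succ : ℤ) * (M:ℤ) ^ ((j.succ:ℕ)) =
        (M:ℤ) * ∑ j : Fin n, (c j.succ : ℤ) * (M:ℤ) ^ (j:ℕ) := by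
      intro c; rw [Finset.mul_sum]; apply Finset.sum_congr rfl; intro j _
      rw [Fin.val_succ, pow_succ]; ring
    rw [heq a, heq b] at hsum
    simp only [Fin.val_zero, pow_zero, mul_one] at hsum
    -- a 0 = b 0 via mod M
    have hmod : (a 0 : ℤ) % M = (b 0 : ℤ) % M := by
      have : ((a 0 : ℤ) + M * ∑ j : Fin n, (a j.succ : ℤ) * (M:ℤ)^(j:ℕ)) % M =
          ((b 0 : ℤ) + M * ∑ j : Fin n, (b j.succ : ℤ) * (M:ℤ)^(j:ℕ)) % M := by rw [hsum]
      simpa [Int.add_mul_emod_self_left] using this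
    have h0 : a 0 = b 0 := by
      have ha0 := ha 0; have hb0 := hb 0
      have : (a 0 : ℤ) = (b 0 : ℤ) := by
        rwa [Int.emod_eq_of_lt (by positivity) (by exact_mod_cast ha0),
          Int.emod_eq_of_lt (by positivity) (by exact_mod_cast hb0)] at hmod
      exact_mod_cast this
    have hM0 : (M:ℤ) ≠ 0 := by positivity
    have htail : ∑ j : Fin n, (a j.succ : ℤ) * (M:ℤ)^(j:ℕ) =
        ∑ j : Fin n, (b j.succ : ℤ) * (M:ℤ)^(j:ℕ) := by
      have : (M:ℤ) * ∑ j : Fin n, (a j.succ : ℤ) * (M:ℤ)^(j:ℕ) =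
          (M:ℤ) * ∑ j : Fin n, (b j.succ : ℤ) * (M:ℤ)^(j:ℕ) := by
        have : (a 0 : ℤ) = (b 0 : ℤ) := by exact_mod_cast h0
        linarith
      exact mul_left_cancel₀ hM0 this
    have := ih (fun j => a j.succ) (fun j => b j.succ) (fun j => ha j.succ) (fun j => hb j.succ) htail
    funext j
    rcases Fin.eq_zero_or_eq_succ j with rfl | ⟨i, rfl⟩
    · exact h0
    · exact congrFun this i

lemma cantor_split (M : ℕ) (A : Finset ℕ) (p q : ℕ) (m : ℤ) :
    m ∈ Cantor M A (p + q) ↔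
      ∃ c ∈ Cantor M A p, ∃ h ∈ Cantor M A q, m = c + h * (M:ℤ) ^ p := by
  constructor
  · rintro ⟨a, haA, rfl⟩
    refine ⟨_, ⟨fun j => a (Fin.castAdd q j), fun j => haA _, rfl⟩,
      _, ⟨fun j => a (Fin.natAdd p j), fun j => haA _, rfl⟩, ?_⟩
    rw [Fin.sum_univ_add, Finset.sum_mul]
    congr 1
    apply Finset.sum_congr rfl; intro j _
    simp [Fin.natAdd, pow_add]; ring
  · rintro ⟨c, ⟨a1, ha1, rfl⟩, h, ⟨a2, ha2, rfl⟩, rfl⟩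
    refine ⟨Fin.addCases a1 a2, ?_, ?_⟩
    · intro j
      refine Fin.addCases (fun i => ?_) (fun i => ?_) j
      · simpa using ha1 i
      · simpa using ha2 i
    · rw [Fin.sum_univ_add, Finset.sum_mul]
      congr 1
      · apply Finset.sum_congr rfl; intro j _; simp
      · apply Finset.sum_congr rfl; intro j _
        simp only [Fin.addCases_right]
        have hv : ((Fin.natAdd p j : Fin (p+q)) : ℕ) = p + (j:ℕ) := rfl
        rw [hv, pow_add]; ring

lemma high_eq (P c h j' : ℤ) (hP : 0 < P) (hc0 : 0 ≤ c) (hc1 : c < P)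
    (h1 : j' * P ≤ c + h * P) (h2 : c + h * P < (j' + 1) * P) : h = j' := by
  have hle : h ≤ j' := by nlinarith
  have hge : j' ≤ h := by nlinarith
  omega

open Classical in
theorem stmt12 (M : ℕ) (hM : 2 ≤ M) (A : Finset ℕ) (hA : A.Nonempty)
    (hAM : ∀ a ∈ A, a < M) (k : ℕ) (hk : 1 ≤ k)
    (k' : ℕ) (hk' : k' ≤ k) (j' : ℤ) :
    {m : ℤ | m ∈ Cantor M A k ∧
        j' * (M : ℤ) ^ k' ≤ m ∧ m < (j' + 1) * (M : ℤ) ^ k'}.ncard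
      = if j' ∈ Cantor M A (k - k') then A.card ^ k' else 0 := by
  obtain ⟨q, rfl⟩ : ∃ q, k = k' + q := ⟨k - k', by omega⟩
  have hq : k' + q - k' = q := by omega
  rw [hq]
  have hPpos : (0:ℤ) < (M:ℤ) ^ k' := by positivity
  -- key characterization of the set
  have key : ∀ m : ℤ, (m ∈ Cantor M A (k' + q) ∧
      j' * (M : ℤ) ^ k' ≤ m ∧ m < (j' + 1) * (M : ℤ) ^ k') ↔
      (j' ∈ Cantor M A q ∧ ∃ a : Fin k' → ℕ, (∀ j, a j ∈ A) ∧
        m = j' * (M:ℤ)^k' + ∑ j, (a j : ℤ) * (M:ℤ)^(j:ℕ)) := by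
    intro m
    constructor
    · rintro ⟨hm, hlo, hhi⟩
      rw [cantor_split] at hm
      obtain ⟨c, ⟨a1, ha1, rfl⟩, h, hh, rfl⟩ := hm
      obtain ⟨h0, h1⟩ := digits_bound M hM k' a1 (fun j => hAM _ (ha1 j))
      have := high_eq ((M:ℤ)^k') _ h j' hPpos h0 h1 hlo hhi
      subst this
      exact ⟨hh, a1, ha1, by ring⟩
    · rintro ⟨hj, a, haA, rfl⟩
      obtain ⟨h0, h1⟩ := digits_bound M hM k' a (fun j => hAM _ (haA j))
      refine ⟨(cantor_split M A k' q _).2 ⟨_, ⟨a, haA, rfl⟩, j', hj, by ring⟩, by linarith, by linarith⟩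
  by_cases hj : j' ∈ Cantor M A q
  · rw [if_pos hj]
    have hset : {m : ℤ | m ∈ Cantor M A (k' + q) ∧
        j' * (M : ℤ) ^ k' ≤ m ∧ m < (j' + 1) * (M : ℤ) ^ k'} =
        (fun a : Fin k' → ℕ => j' * (M:ℤ)^k' + ∑ j, (a j : ℤ) * (M:ℤ)^(j:ℕ)) ''
          ↑(Fintype.piFinset (fun _ : Fin k' => A)) := by
      ext m
      rw [Set.mem_setOf_eq, key m]
      simp only [Set.mem_image, Fintype.mem_piFinset, Finset.mem_coe]
      constructor
      · rintro ⟨_, a, haA, rfl⟩; exact ⟨a, haA, rfl⟩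
      · rintro ⟨a, haA, rfl⟩; exact ⟨hj, a, haA, rfl⟩
    rw [hset, Set.ncard_image_of_injOn, Set.ncard_coe_finset, Fintype.card_piFinset]
    · simp
    · intro a ha b hb hab
      simp only [Fintype.mem_piFinset, Finset.mem_coe] at ha hb
      simp only [add_right_inj] at hab
      exact digits_inj M hM k' a b (fun j => hAM _ (ha j)) (fun j => hAM _ (hb j)) hab
  · rw [if_neg hj]
    have : {m : ℤ | m ∈ Cantor M A (k' + q) ∧
        j' * (M : ℤ) ^ k' ≤ m ∧ m < (j' + 1) * (M : ℤ) ^ k'} = ∅ := by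
      ext m
      simp only [Set.mem_setOf_eq, Set.mem_empty_iff_false, iff_false]
      intro hm
      exact hj ((key m).1 hm).1
    rw [this, Set.ncard_empty]
end

section
/- Let M ≥ 2, A ⊂ {0,…,M−1} with 1 ≤ |A| ≤ M, δ = log|A|/log M, M^k ≤ N < M^{k+1} with N ∈ Mℤ, and C_k(N) := {⌈jN/M^k⌉ : j ∈ C_k} ⊂ ℤ_N, where C_k is the discrete Cantor set of base M with alphabet A. Then C_k(N) is δ-regular with constant 8M^{3δ}: for every interval J with |J| ≥ 1, #(C_k(N) ∩ J) ≤ 8M^{3δ}|J|^δ, and for every interval J with 1 ≤ |J| ≤ N centered at a point of C_k(N), #(C_k(N) ∩ J) ≥ (8M^{3δ})^{-1}|J|^δ. -/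
/-- The dilated Cantor set `C_k(N) = {⌈jN/M^k⌉ : j ∈ C_k}`. -/
def CantorN (M : ℕ) (A : Finset ℕ) (k N : ℕ) : Set ℤ :=
  {b | ∃ j ∈ Cantor M A k, b = ⌈(j * N : ℚ) / (M : ℚ) ^ k⌉}

theorem Int.add_mul_inj_of_lt {P x x' y y' : ℤ} (hx : 0 ≤ x) (hxP : x < P) (hx' : 0 ≤ x')
    (hx'P : x' < P) (h : x + P * y = x' + P * y') : x = x' ∧ y = y' := by
  have hP : P ≠ 0 := by omega
  have hy : y = y' := by
    have hdiv : ∀ {x y : ℤ}, 0 ≤ x → x < P → (x + P * y) / P = y := fun hx hxP => by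
      rw [Int.add_mul_ediv_left _ _ hP, Int.ediv_eq_zero_of_lt hx hxP, zero_add]
    rw [← hdiv (y := y) hx hxP, h, hdiv hx' hx'P]
  subst hy
  exact ⟨by linarith, rfl⟩

theorem Int.eq_floor_or_eq_floor_add_one {P x y : ℤ} (hP : 0 < P) (hx : 0 ≤ x) (hxP : x < P)
    {c d : ℝ} (hcd : d - c ≤ P) (h : ((x + P * y : ℤ) : ℝ) ∈ Set.Icc c d) :
    y = ⌊c / P⌋ ∨ y = ⌊c / P⌋ + 1 := by
  have hPR : (0 : ℝ) < P := by exact_mod_cast hP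
  have hx0 : (0 : ℝ) ≤ x := by exact_mod_cast hx
  have hxP' : (x : ℝ) < P := by exact_mod_cast hxP
  push_cast at h
  obtain ⟨hc, hd⟩ := h
  have hlo : ⌊c / P⌋ ≤ y := Int.floor_le_iff.2 (by rw [div_lt_iff₀ hPR]; nlinarith)
  have hhi : y ≤ ⌊c / P⌋ + 1 := by
    rw [← Int.floor_add_one, Int.le_floor, div_add_one hPR.ne', le_div_iff₀ hPR]
    nlinarith
  omega

theorem injOn_sum_mul_pow (M k : ℕ) :
    Set.InjOn (fun a : Fin k → ℕ => ∑ j, (a j : ℤ) * (M : ℤ) ^ (j : ℕ)) {a | ∀ j, a j < M} := by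
  induction k with
  | zero => exact fun a _ b _ _ => Subsingleton.elim a b
  | succ k ih =>
    have hsplit : ∀ c : Fin (k + 1) → ℕ, ∑ j, (c j : ℤ) * (M : ℤ) ^ (j : ℕ) =
        c 0 + M * ∑ j : Fin k, (c j.succ : ℤ) * (M : ℤ) ^ (j : ℕ) := by
      intro c
      rw [Fin.sum_univ_succ, Finset.mul_sum]
      simp [pow_succ, mul_comm, mul_assoc]
    intro a ha b hb h
    simp only [hsplit] at h
    obtain ⟨h0, htail⟩ := Int.add_mul_inj_of_lt (by positivity) (by exact_mod_cast ha 0)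
      (by positivity) (by exact_mod_cast hb 0) h
    have htail := ih (fun j => ha j.succ) (fun j => hb j.succ) htail
    funext i
    exact Fin.cases (by exact_mod_cast h0) (fun j => congrFun htail j) i

theorem cantor_eq_image (M : ℕ) (A : Finset ℕ) (k : ℕ) :
    Cantor M A k = (fun a : Fin k → ℕ => ∑ j, (a j : ℤ) * (M : ℤ) ^ (j : ℕ)) ''
      (Fintype.piFinset fun _ : Fin k => A : Set (Fin k → ℕ)) := by
  ext z
  simp [Cantor, eq_comm]

theorem cantor_finite (M : ℕ) (A : Finset ℕ) (k : ℕ) : (Cantor M A k).Finite := by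
  rw [cantor_eq_image]
  exact (Finset.finite_toSet _).image _

section Cantor

variable {M : ℕ} {A : Finset ℕ}

theorem ncard_cantor (hAM : ∀ a ∈ A, a < M) (k : ℕ) : (Cantor M A k).ncard = A.card ^ k := by
  rw [cantor_eq_image, Set.InjOn.ncard_image, Set.ncard_coe_finset, Fintype.card_piFinset]
  · simp
  · exact (injOn_sum_mul_pow M k).mono fun a ha j => hAM _ (Fintype.mem_piFinset.mp ha j)

theorem mem_cantor_zero {z : ℤ} : z ∈ Cantor M A 0 ↔ z = 0 := by
  simp [Cantor]

theorem mem_cantor_one {z : ℤ} : z ∈ Cantor M A 1 ↔ ∃ a ∈ A, z = a := by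
  constructor
  · rintro ⟨a, ha, rfl⟩
    exact ⟨a 0, ha 0, by simp⟩
  · rintro ⟨a, ha, rfl⟩
    exact ⟨fun _ => a, fun _ => ha, by simp⟩

theorem mem_cantor_add_iff {m n : ℕ} {z : ℤ} :
    z ∈ Cantor M A (m + n) ↔ ∃ x ∈ Cantor M A m, ∃ y ∈ Cantor M A n, z = x + M ^ m * y := by
  constructor
  · rintro ⟨a, ha, rfl⟩
    refine ⟨_, ⟨fun i => a (Fin.castAdd n i), fun i => ha _, rfl⟩,
      _, ⟨fun i => a (Fin.natAdd m i), fun i => ha _, rfl⟩, ?_⟩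
    rw [Fin.sum_univ_add, Finset.mul_sum]
    simp [pow_add, mul_left_comm]
  · rintro ⟨_, ⟨a, ha, rfl⟩, _, ⟨b, hb, rfl⟩, rfl⟩
    refine ⟨Fin.append a b, Fin.addCases (by simpa using ha) (by simpa using hb), ?_⟩
    rw [Fin.sum_univ_add, Finset.mul_sum]
    simp [pow_add, mul_left_comm]

theorem mem_Ico_of_mem_cantor (hAM : ∀ a ∈ A, a < M) {k : ℕ} {z : ℤ} (hz : z ∈ Cantor M A k) :
    z ∈ Set.Ico 0 ((M : ℤ) ^ k) := by
  induction k generalizing z with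
  | zero => simp [mem_cantor_zero.1 hz]
  | succ k ih =>
    obtain ⟨x, hx, y, hy, rfl⟩ := mem_cantor_add_iff.1 hz
    obtain ⟨a, ha, rfl⟩ := mem_cantor_one.1 hy
    obtain ⟨hx0, hxM⟩ := ih hx
    have haM : (a : ℤ) + 1 ≤ M := by exact_mod_cast hAM a ha
    have hMk : (0 : ℤ) ≤ M ^ k := by positivity
    rw [pow_succ]
    constructor <;> nlinarith

theorem ncard_cantor_inter_Icc_le (hA : A.Nonempty) (hAM : ∀ a ∈ A, a < M) {k m : ℕ}
    {c d : ℝ} (hcd : d - c ≤ (M : ℝ) ^ m) :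
    {z | z ∈ Cantor M A k ∧ (z : ℝ) ∈ Set.Icc c d}.ncard ≤ 2 * A.card ^ m := by
  rcases le_or_gt m k with hmk | hkm
  · obtain ⟨n, rfl⟩ := Nat.exists_eq_add_of_le hmk
    obtain ⟨a, ha⟩ := hA
    have hP : (0 : ℤ) < M ^ m := pow_pos (by exact_mod_cast (hAM a ha).pos) m
    set t := ⌊c / ((M ^ m : ℤ) : ℝ)⌋
    have hsub : {z | z ∈ Cantor M A (m + n) ∧ (z : ℝ) ∈ Set.Icc c d} ⊆
        (· + M ^ m * t) '' Cantor M A m ∪ (· + M ^ m * (t + 1)) '' Cantor M A m := by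
      rintro _ ⟨hz, hzI⟩
      obtain ⟨x, hx, y, -, rfl⟩ := mem_cantor_add_iff.1 hz
      obtain ⟨hx0, hxP⟩ := mem_Ico_of_mem_cantor hAM hx
      rcases Int.eq_floor_or_eq_floor_add_one hP hx0 hxP (by push_cast; exact hcd) hzI
        with rfl | rfl
      exacts [Or.inl ⟨x, hx, rfl⟩, Or.inr ⟨x, hx, rfl⟩]
    calc _ ≤ _ := Set.ncard_le_ncard hsub
          (((cantor_finite M A m).image _).union ((cantor_finite M A m).image _))
      _ ≤ _ := Set.ncard_union_le _ _
      _ = 2 * A.card ^ m := by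
        rw [Set.ncard_image_of_injective _ (add_left_injective _),
          Set.ncard_image_of_injective _ (add_left_injective _), ncard_cantor hAM]
        ring
  · calc _ ≤ (Cantor M A k).ncard := Set.ncard_le_ncard (fun z hz => hz.1) (cantor_finite M A k)
      _ = A.card ^ k := ncard_cantor hAM k
      _ ≤ A.card ^ m := Nat.pow_le_pow_right hA.card_pos hkm.le
      _ ≤ 2 * A.card ^ m := by omega

theorem pow_card_le_ncard_cantor_near (hAM : ∀ a ∈ A, a < M) {k m : ℕ} (hm : m ≤ k) {z : ℤ}
    (hz : z ∈ Cantor M A k) :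
    A.card ^ m ≤ {z' | z' ∈ Cantor M A k ∧ |z' - z| ≤ M ^ m - 1}.ncard := by
  obtain ⟨n, rfl⟩ := Nat.exists_eq_add_of_le hm
  obtain ⟨x, hx, y, hy, rfl⟩ := mem_cantor_add_iff.1 hz
  rw [← ncard_cantor hAM m,
    ← Set.ncard_image_of_injective _ (add_left_injective (M ^ m * y : ℤ))]
  refine Set.ncard_le_ncard ?_ ((cantor_finite M A (m + n)).subset fun _ h => h.1)
  rintro _ ⟨x', hx', rfl⟩
  refine ⟨mem_cantor_add_iff.2 ⟨x', hx', y, hy, rfl⟩, ?_⟩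
  obtain ⟨hx0, hxP⟩ := mem_Ico_of_mem_cantor hAM hx
  obtain ⟨hx'0, hx'P⟩ := mem_Ico_of_mem_cantor hAM hx'
  rw [abs_le]
  constructor <;> linarith

end Cantor

section Dilation

variable {K : Type*} [Field K] [LinearOrder K] [IsStrictOrderedRing K] [FloorRing K]

theorem strictMono_ceil_intCast_mul {t : K} (ht : 1 ≤ t) :
    StrictMono fun j : ℤ => ⌈(j : K) * t⌉ := by
  intro i j hij
  have hij' : (i : K) + 1 ≤ j := by exact_mod_cast hij
  have h := Int.ceil_le_ceil (show (i : K) * t + 1 ≤ j * t by nlinarith)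
  rw [Int.ceil_add_one] at h
  simp only
  omega

theorem ceil_intCast_mul_sub_le {t : K} {M D i j : ℤ} (ht : 0 ≤ t) (htM : t ≤ M) (hD : 0 ≤ D)
    (h : i - j ≤ D) : ⌈(i : K) * t⌉ - ⌈(j : K) * t⌉ ≤ D * M := by
  have h1 : ⌈(i : K) * t⌉ ≤ ⌈(j : K) * t⌉ + ⌈((i - j : ℤ) : K) * t⌉ := by
    calc ⌈(i : K) * t⌉ = ⌈(j : K) * t + ((i - j : ℤ) : K) * t⌉ := by push_cast; ring_nf
      _ ≤ _ := Int.ceil_add_le _ _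
  have h2 : ⌈((i - j : ℤ) : K) * t⌉ ≤ D * M := by
    have hij : ((i - j : ℤ) : K) ≤ D := by exact_mod_cast h
    have hD' : (0 : K) ≤ D := by exact_mod_cast hD
    rw [Int.ceil_le]
    push_cast at hij ⊢
    nlinarith
  omega

theorem ncard_image_ceil_mul_inter_Icc_le {X : Set ℤ} (hX : X.Finite) {t : K} (ht : 0 < t)
    (c d : K) :
    {z | z ∈ (fun j : ℤ => ⌈(j : K) * t⌉) '' X ∧ (z : K) ∈ Set.Icc c d}.ncard ≤
      {j | j ∈ X ∧ (j : K) ∈ Set.Icc ((c - 1) / t) (d / t)}.ncard := by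
  have hfin : {j | j ∈ X ∧ (j : K) ∈ Set.Icc ((c - 1) / t) (d / t)}.Finite :=
    hX.subset fun _ h => h.1
  refine (Set.ncard_le_ncard (t := (fun j : ℤ => ⌈(j : K) * t⌉) '' _) ?_ (hfin.image _)).trans
    (Set.ncard_image_le hfin)
  rintro _ ⟨⟨j, hj, rfl⟩, hc, hd⟩
  refine ⟨j, ⟨hj, ?_, ?_⟩, rfl⟩
  · rw [div_le_iff₀ ht]
    linarith [Int.ceil_lt_add_one ((j : K) * t)]
  · rw [le_div_iff₀ ht]
    linarith [Int.le_ceil ((j : K) * t)]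

end Dilation

theorem cantorN_eq_image (M : ℕ) (A : Finset ℕ) (k N : ℕ) :
    CantorN M A k N = (fun j : ℤ => ⌈(j : ℝ) * ((N : ℝ) / (M : ℝ) ^ k)⌉) '' Cantor M A k := by
  ext b
  simp only [CantorN, Set.mem_ofPred_eq, Set.mem_image]
  refine exists_congr fun j => and_congr_right fun _ => ?_
  rw [← Rat.ceil_cast (α := ℝ), eq_comm]
  push_cast
  rw [mul_div_assoc]

theorem rpow_two_mul_pow_mul_le {M x δ : ℝ} (hM : 1 ≤ M) (hx : 0 ≤ x) (hδ0 : 0 ≤ δ)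
    (hδ1 : δ ≤ 1) {j : ℕ} (hj : j ≤ 3) : (2 * M ^ j * x) ^ δ ≤ 2 * M ^ (3 * δ) * x ^ δ := by
  rw [Real.mul_rpow (by positivity) hx, Real.mul_rpow (by norm_num) (by positivity),
    ← Real.rpow_natCast_mul (by linarith)]
  have h2 : (2 : ℝ) ^ δ ≤ 2 := by
    simpa using Real.rpow_le_rpow_of_exponent_le (by norm_num : (1 : ℝ) ≤ 2) hδ1
  have hMj : M ^ ((j : ℝ) * δ) ≤ M ^ (3 * δ) :=
    Real.rpow_le_rpow_of_exponent_le hM (by gcongr; exact_mod_cast hj)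
  gcongr

section CantorN

variable {M : ℕ} {A : Finset ℕ} {k N : ℕ} {δ : ℝ}

theorem ncard_cantorN_inter_Icc_le (hM : 0 < M) (hA : A.Nonempty) (hAM : ∀ a ∈ A, a < M)
    (hN : M ^ k ≤ N) {m : ℕ} {c d : ℝ} (hcd : d - c + 1 ≤ (M : ℝ) ^ m) :
    {z | z ∈ CantorN M A k N ∧ (z : ℝ) ∈ Set.Icc c d}.ncard ≤ 2 * A.card ^ m := by
  have hMk : (0 : ℝ) < (M : ℝ) ^ k := by positivity
  have ht : 1 ≤ (N : ℝ) / (M : ℝ) ^ k := by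
    rw [one_le_div hMk]
    exact_mod_cast hN
  rw [cantorN_eq_image]
  refine (ncard_image_ceil_mul_inter_Icc_le (cantor_finite M A k) (by linarith) c d).trans
    (ncard_cantor_inter_Icc_le hA hAM ?_)
  rw [← sub_div, div_le_iff₀ (by linarith)]
  nlinarith [pow_nonneg (Nat.cast_nonneg M : (0 : ℝ) ≤ M) m]

theorem pow_card_le_ncard_cantorN_inter_Icc (hM : 0 < M) (hAM : ∀ a ∈ A, a < M)
    (hN₁ : M ^ k ≤ N) (hN₂ : N ≤ M ^ (k + 1)) {j₀ : ℤ} (hj₀ : j₀ ∈ CantorN M A k N) {m : ℕ}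
    (hm : m ≤ k) {r : ℝ} (hr : ((M : ℝ) ^ m - 1) * M ≤ r) :
    A.card ^ m ≤ {z | z ∈ CantorN M A k N ∧ (z : ℝ) ∈ Set.Icc (j₀ - r) (j₀ + r)}.ncard := by
  have hMk : (0 : ℝ) < (M : ℝ) ^ k := by positivity
  set t := (N : ℝ) / (M : ℝ) ^ k
  have ht : 1 ≤ t := by
    rw [one_le_div hMk]
    exact_mod_cast hN₁
  have htM : t ≤ ((M : ℤ) : ℝ) := by
    rw [div_le_iff₀ hMk, Int.cast_natCast, ← pow_succ']
    exact_mod_cast hN₂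
  have hD : (0 : ℤ) ≤ M ^ m - 1 := by
    linarith [one_le_pow₀ (show (1 : ℤ) ≤ M by exact_mod_cast hM) (n := m)]
  rw [cantorN_eq_image] at hj₀ ⊢
  obtain ⟨x, hx, rfl⟩ := hj₀
  calc A.card ^ m ≤ {z' | z' ∈ Cantor M A k ∧ |z' - x| ≤ M ^ m - 1}.ncard :=
        pow_card_le_ncard_cantor_near hAM hm hx
    _ = ((fun j : ℤ => ⌈(j : ℝ) * t⌉) '' {z' | z' ∈ Cantor M A k ∧ |z' - x| ≤ M ^ m - 1}).ncard :=
        (Set.ncard_image_of_injective _ (strictMono_ceil_intCast_mul ht).injective).symm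
    _ ≤ _ := by
      refine Set.ncard_le_ncard ?_ (((cantor_finite M A k).image _).subset fun _ h => h.1)
      rintro _ ⟨z', ⟨hz', hdist⟩, rfl⟩
      refine ⟨⟨z', hz', rfl⟩, ?_⟩
      rw [abs_le] at hdist
      have h₁ : ((⌈(z' : ℝ) * t⌉ - ⌈(x : ℝ) * t⌉ : ℤ) : ℝ) ≤ ((M ^ m - 1) * M : ℤ) := by
        exact_mod_cast ceil_intCast_mul_sub_le (by linarith) htM hD (by linarith)
      have h₂ : ((⌈(x : ℝ) * t⌉ - ⌈(z' : ℝ) * t⌉ : ℤ) : ℝ) ≤ ((M ^ m - 1) * M : ℤ) := by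
        exact_mod_cast ceil_intCast_mul_sub_le (by linarith) htM hD (by linarith)
      push_cast at h₁ h₂
      constructor <;> linarith

theorem ncard_cantorN_inter_Icc_le_rpow (hM : 2 ≤ M) (hA : A.Nonempty) (hAM : ∀ a ∈ A, a < M)
    (hN : M ^ k ≤ N) (hMδ : (M : ℝ) ^ δ = A.card) (hδ0 : 0 ≤ δ) (hδ1 : δ ≤ 1) {c d : ℝ}
    (hcd : 1 ≤ d - c) :
    ({z | z ∈ CantorN M A k N ∧ (z : ℝ) ∈ Set.Icc c d}.ncard : ℝ) ≤
      8 * (M : ℝ) ^ (3 * δ) * (d - c) ^ δ := by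
  have hM1 : (1 : ℝ) < M := by exact_mod_cast hM
  obtain ⟨n, hn, hn'⟩ := exists_nat_pow_near (show 1 ≤ d - c + 1 by linarith) hM1
  have hpow : ((M : ℝ) ^ (n + 1)) ^ δ = (A.card : ℝ) ^ (n + 1) := by
    rw [← Real.rpow_pow_comm (by positivity), hMδ]
  have hMpow : 0 ≤ (M : ℝ) ^ (3 * δ) * (d - c) ^ δ := by positivity
  calc _ ≤ 2 * (A.card : ℝ) ^ (n + 1) := by
        exact_mod_cast ncard_cantorN_inter_Icc_le (by omega) hA hAM hN hn'.le
    _ = 2 * ((M : ℝ) ^ (n + 1)) ^ δ := by rw [hpow]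
    _ ≤ 2 * (2 * (M : ℝ) ^ 1 * (d - c)) ^ δ := by
        gcongr
        rw [pow_succ]
        nlinarith
    _ ≤ 2 * (2 * (M : ℝ) ^ (3 * δ) * (d - c) ^ δ) := by
        gcongr
        exact rpow_two_mul_pow_mul_le hM1.le (by linarith) hδ0 hδ1 (by norm_num)
    _ ≤ 8 * (M : ℝ) ^ (3 * δ) * (d - c) ^ δ := by linarith

theorem rpow_le_ncard_cantorN_inter_Icc (hM : 2 ≤ M) (hAM : ∀ a ∈ A, a < M)
    (hN₁ : M ^ k ≤ N) (hN₂ : N < M ^ (k + 1)) (hMδ : (M : ℝ) ^ δ = A.card) (hδ0 : 0 ≤ δ)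
    (hδ1 : δ ≤ 1) {j₀ : ℤ} (hj₀ : j₀ ∈ CantorN M A k N) {r : ℝ} (hr₁ : 1 ≤ 2 * r)
    (hr₂ : 2 * r ≤ N) :
    (8 * (M : ℝ) ^ (3 * δ))⁻¹ * (2 * r) ^ δ ≤
      ({z | z ∈ CantorN M A k N ∧ (z : ℝ) ∈ Set.Icc (j₀ - r) (j₀ + r)}.ncard : ℝ) := by
  have hM1 : (1 : ℝ) < M := by exact_mod_cast hM
  have hrM : r / M ≤ r := div_le_self (by linarith) hM1.le
  -- the scale with `M ^ (m + 1) ≈ max M r`, so `m = 0` when `r < M`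
  obtain ⟨m, hm, hm'⟩ := exists_nat_pow_near (le_max_left 1 (r / M)) hM1
  have hmk : m ≤ k := by
    have hNR : (N : ℝ) < (M : ℝ) ^ (k + 1) := by exact_mod_cast hN₂
    have : (M : ℝ) ^ m < M ^ (k + 1) :=
      hm.trans_lt (max_lt (one_lt_pow₀ hM1 (by omega)) (by linarith))
    exact Nat.lt_succ_iff.1 ((pow_lt_pow_iff_right₀ hM1).1 this)
  have hr_lo : ((M : ℝ) ^ m - 1) * M ≤ r := by
    rcases le_max_iff.1 hm with h | h
    · nlinarith
    · rw [le_div_iff₀ (by linarith)] at h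
      linarith
  have hr_hi : 2 * r ≤ 2 * (M : ℝ) ^ 2 * (M : ℝ) ^ m := by
    have h := (div_lt_iff₀ (by linarith)).1 ((le_max_right _ _).trans_lt hm')
    have e : (M : ℝ) ^ (m + 1) * M = M ^ 2 * M ^ m := by ring
    linarith
  have hpow : ((M : ℝ) ^ m) ^ δ = (A.card : ℝ) ^ m := by
    rw [← Real.rpow_pow_comm (by positivity), hMδ]
  have h8 : (0 : ℝ) < 8 * (M : ℝ) ^ (3 * δ) := by positivity
  calc (8 * (M : ℝ) ^ (3 * δ))⁻¹ * (2 * r) ^ δ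
      ≤ (8 * (M : ℝ) ^ (3 * δ))⁻¹ * (2 * (M : ℝ) ^ (3 * δ) * ((M : ℝ) ^ m) ^ δ) := by
        gcongr
        exact (Real.rpow_le_rpow (by linarith) hr_hi hδ0).trans
          (rpow_two_mul_pow_mul_le hM1.le (by positivity) hδ0 hδ1 (by norm_num))
    _ = (A.card : ℝ) ^ m / 4 := by
        rw [hpow]
        field_simp
        ring
    _ ≤ (A.card : ℝ) ^ m := by linarith [pow_nonneg (Nat.cast_nonneg A.card : (0 : ℝ) ≤ _) m]
    _ ≤ _ := by
        exact_mod_cast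
          pow_card_le_ncard_cantorN_inter_Icc (by omega) hAM hN₁ hN₂.le hj₀ hmk hr_lo

end CantorN

theorem stmt13_general (M : ℕ) (hM : 2 ≤ M) (A : Finset ℕ) (hA : A.Nonempty)
    (hAM : ∀ a ∈ A, a < M) (k : ℕ) (N : ℕ)
    (hN₁ : M ^ k ≤ N) (hN₂ : N < M ^ (k + 1)) (δ : ℝ)
    (hδ : δ = Real.log A.card / Real.log M) :
    (∀ c d : ℝ, 1 ≤ d - c →
      (({m : ℤ | m ∈ CantorN M A k N ∧ (m : ℝ) ∈ Set.Icc c d}.ncard : ℝ))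
        ≤ 8 * (M : ℝ) ^ (3 * δ) * (d - c) ^ δ) ∧
    (∀ j₀ ∈ CantorN M A k N, ∀ r : ℝ, 1 ≤ 2 * r → 2 * r ≤ (N : ℝ) →
      (8 * (M : ℝ) ^ (3 * δ))⁻¹ * (2 * r) ^ δ
        ≤ ({m : ℤ | m ∈ CantorN M A k N ∧
            (m : ℝ) ∈ Set.Icc ((j₀ : ℝ) - r) ((j₀ : ℝ) + r)}.ncard : ℝ)) := by
  have hM1 : (1 : ℝ) < M := by exact_mod_cast hM
  have hA1 : (1 : ℝ) ≤ A.card := by exact_mod_cast hA.card_pos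
  have hAM' : (A.card : ℝ) ≤ M := by
    exact_mod_cast (Finset.card_le_card fun a ha => Finset.mem_range.2 (hAM a ha)).trans_eq
      (Finset.card_range M)
  have hδ' : δ = Real.logb M A.card := hδ
  have hMδ : (M : ℝ) ^ δ = A.card := by
    rw [hδ']
    exact Real.rpow_logb (by linarith) hM1.ne' (by linarith)
  have hδ0 : 0 ≤ δ := hδ' ▸ Real.logb_nonneg hM1 hA1
  have hδ1 : δ ≤ 1 := by
    rw [hδ', ← Real.logb_self_eq_one hM1]
    exact Real.logb_le_logb_of_le hM1 (by linarith) hAM'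
  exact ⟨fun c d hcd => ncard_cantorN_inter_Icc_le_rpow hM hA hAM hN₁ hMδ hδ0 hδ1 hcd,
    fun j₀ hj₀ r hr₁ hr₂ =>
      rpow_le_ncard_cantorN_inter_Icc hM hAM hN₁ hN₂ hMδ hδ0 hδ1 hj₀ hr₁ hr₂⟩

theorem stmt13 (M : ℕ) (hM : 2 ≤ M) (A : Finset ℕ) (hA : A.Nonempty)
    (hAM : ∀ a ∈ A, a < M) (k : ℕ) (hk : 1 ≤ k) (N : ℕ)
    (hN₁ : M ^ k ≤ N) (hN₂ : N < M ^ (k + 1)) (hdvd : M ∣ N) (δ : ℝ)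
    (hδ : δ = Real.log A.card / Real.log M) :
    (∀ c d : ℝ, 1 ≤ d - c →
      (({m : ℤ | m ∈ CantorN M A k N ∧ (m : ℝ) ∈ Set.Icc c d}.ncard : ℝ))
        ≤ 8 * (M : ℝ) ^ (3 * δ) * (d - c) ^ δ) ∧
    (∀ j₀ ∈ CantorN M A k N, ∀ r : ℝ, 1 ≤ 2 * r → 2 * r ≤ (N : ℝ) →
      (8 * (M : ℝ) ^ (3 * δ))⁻¹ * (2 * r) ^ δ
        ≤ ({m : ℤ | m ∈ CantorN M A k N ∧
            (m : ℝ) ∈ Set.Icc ((j₀ : ℝ) - r) ((j₀ : ℝ) + r)}.ncard : ℝ)) :=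
  stmt13_general M hM A hA hAM k N hN₁ hN₂ δ hδ
end

section
/- Let (X, μ_X) be δ-regular up to scale L^{−K} with constant C_R, 0 < δ < 1, and suppose L ≥ (4C_R)^{6/(δ(1−δ))}. Then for each interval I in the base-L discretization tree with 0 ≤ H(I) < K, there exist two children I', I'' of I such that (1/2)C_R^{−2/δ} L^{−H(I)−2/3} ≤ |x' − x''| ≤ 2L^{−H(I)−2/3} for all x' ∈ I', x'' ∈ I''. -/
open MeasureTheory

def IsDeltaRegular (X : Set ℝ) (μ : Measure ℝ) (δ C h : ℝ) : Prop :=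
  (∀ a b : ℝ, h ≤ b - a → μ (Set.Icc a b) ≤ ENNReal.ofReal (C * (b - a) ^ δ)) ∧
  (∀ x r : ℝ, x ∈ X → h ≤ 2 * r → 2 * r ≤ 1 →
    ENNReal.ofReal (C⁻¹ * (2 * r) ^ δ) ≤ μ (Set.Icc (x - r) (x + r)))

/-- `[c,d]` is an interval of the base-`L` discretization of `μ` at height `k`:
endpoints in `L^{-k}ℤ`, every constituent subinterval of length `L^{-k}` has positive
measure, and the adjacent intervals of length `L^{-k}` have zero measure. -/
def MemVk (μ : Measure ℝ) (L : ℕ) (k : ℕ) (c d : ℝ) : Prop :=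
  (∃ m : ℤ, c = (m : ℝ) * (L : ℝ) ^ (-(k : ℤ))) ∧
  (∃ m : ℤ, d = (m : ℝ) * (L : ℝ) ^ (-(k : ℤ))) ∧ c < d ∧
  (∀ m : ℤ, c ≤ (m : ℝ) * (L : ℝ) ^ (-(k : ℤ)) →
    (m : ℝ) * (L : ℝ) ^ (-(k : ℤ)) < d →
    0 < μ (Set.Icc ((m : ℝ) * (L : ℝ) ^ (-(k : ℤ)))
      (((m : ℝ) + 1) * (L : ℝ) ^ (-(k : ℤ))))) ∧
  μ (Set.Icc (c - (L : ℝ) ^ (-(k : ℤ))) c) = 0 ∧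
  μ (Set.Icc d (d + (L : ℝ) ^ (-(k : ℤ)))) = 0

/-!
The children of `[c, d]` are the maximal runs of positive-measure cells of length
`ℓ = L^{-(k+1)}` inside it. A run of `n` cells carries mass at least `(n / 3) C_R⁻¹ ℓ^δ`
(lower regularity on disjoint balls centred in every third cell) and at most `C_R (n ℓ)^δ`
(upper regularity), so `n ≤ C_R' = (3 C_R²)^{1/(1-δ)}`.
Take `x₀ ∈ X` in some child and put `ρ = L^{-k-2/3}`. By the two regularity bounds the annulus
`(2/3) C_R^{-2/δ} ρ < |y - x₀| ≤ (3/2) ρ` has positive mass; it lies in `[c, d]` up to the null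
margins of width `L^{-k}`, so it meets some child at a point `y`. Since `L` is large,
`2 C_R' ℓ ≤ C_R^{-2/δ} ρ / 6`, and the distances between points of the two children differ from
`|x₀ - y|` by at most `2 C_R' ℓ`.
-/

open Set Metric
open scoped ENNReal

def gridCell (ℓ : ℝ) (j : ℤ) : Set ℝ := Icc (j * ℓ) ((j + 1) * ℓ)

lemma Icc_subset_biUnion_gridCell {ℓ : ℝ} (hℓ : 0 < ℓ) {M N : ℤ} (hMN : M < N) :
    Icc (M * ℓ) (N * ℓ) ⊆ ⋃ j ∈ Finset.Ico M N, gridCell ℓ j := by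
  intro x ⟨hMx, hxN⟩
  have hM : (M : ℝ) ≤ x / ℓ := (le_div_iff₀ hℓ).2 hMx
  have hN : x / ℓ ≤ N := (div_le_iff₀ hℓ).2 hxN
  simp only [mem_iUnion, Finset.mem_Ico, gridCell, mem_Icc]
  refine ⟨min ⌊x / ℓ⌋ (N - 1), ⟨le_min (Int.le_floor.2 hM) (by omega), by omega⟩, ?_, ?_⟩
  · calc ((min ⌊x / ℓ⌋ (N - 1) : ℤ) : ℝ) * ℓ ≤ ⌊x / ℓ⌋ * ℓ := by gcongr; exact min_le_left _ _
      _ ≤ x / ℓ * ℓ := by gcongr; exact Int.floor_le _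
      _ = x := div_mul_cancel₀ x hℓ.ne'
  · rcases min_choice ⌊x / ℓ⌋ (N - 1) with h | h <;> rw [h]
    · exact (div_le_iff₀ hℓ).1 (Int.lt_floor_add_one _).le
    · push_cast; linarith

lemma exists_gridCell_measure_inter_pos (μ : Measure ℝ) {ℓ : ℝ} (hℓ : 0 < ℓ) {M N : ℤ}
    (hMN : M < N) {S : Set ℝ} (hS : 0 < μ (S ∩ Icc (M * ℓ) (N * ℓ))) :
    ∃ j, M ≤ j ∧ j < N ∧ 0 < μ (S ∩ gridCell ℓ j) := by
  by_contra! h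
  have hcover : S ∩ Icc (M * ℓ) (N * ℓ) ⊆ ⋃ j ∈ (Finset.Ico M N : Set ℤ), S ∩ gridCell ℓ j := by
    rw [← inter_iUnion₂]
    exact inter_subset_inter_right S (by simpa using Icc_subset_biUnion_gridCell hℓ hMN)
  refine hS.ne' (measure_mono_null hcover
    ((measure_biUnion_null_iff (Finset.countable_toSet _)).2 fun j hj => ?_))
  simp only [Finset.coe_Ico, mem_Ico] at hj
  exact nonpos_iff_eq_zero.1 (h j hj.1 hj.2)

lemma Int.exists_maximal_run (P : ℤ → Prop) {A B m : ℤ} (hm : P m) (hA : ¬ P A) (hB : ¬ P B)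
    (hAm : A < m) (hmB : m < B) :
    ∃ a b : ℤ, A < a ∧ a ≤ m ∧ m ≤ b ∧ b < B ∧
      (∀ j, a ≤ j → j ≤ b → P j) ∧ ¬ P (a - 1) ∧ ¬ P (b + 1) := by
  obtain ⟨a', ⟨ha'm, ha'⟩, ha'max⟩ := Int.exists_greatest_of_bdd (P := fun j => j < m ∧ ¬ P j)
    ⟨m, fun j hj => hj.1.le⟩ ⟨A, hAm, hA⟩
  obtain ⟨b', ⟨hmb', hb'⟩, hb'min⟩ := Int.exists_least_of_bdd (P := fun j => m < j ∧ ¬ P j)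
    ⟨m, fun j hj => hj.1.le⟩ ⟨B, hmB, hB⟩
  refine ⟨a' + 1, b' - 1, ?_, by omega, by omega, ?_, ?_, by simpa using ha', by simpa using hb'⟩
  · have := ha'max A ⟨hAm, hA⟩; omega
  · have := hb'min B ⟨hmB, hB⟩; omega
  · intro j hj1 hj2
    by_contra hj
    rcases lt_trichotomy j m with hjm | rfl | hjm
    · have := ha'max j ⟨hjm, hj⟩; omega
    · exact hj hm
    · have := hb'min j ⟨hjm, hj⟩; omega

lemma memVk_of_maximal_run (μ : Measure ℝ) {L : ℕ} (hL : 0 < L) (k : ℕ) {a b : ℤ} (hab : a ≤ b)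
    (hrun : ∀ j, a ≤ j → j ≤ b → 0 < μ (gridCell ((L : ℝ) ^ (-(k : ℤ))) j))
    (ha : μ (gridCell ((L : ℝ) ^ (-(k : ℤ))) (a - 1)) = 0)
    (hb : μ (gridCell ((L : ℝ) ^ (-(k : ℤ))) (b + 1)) = 0) :
    MemVk μ L k (a * (L : ℝ) ^ (-(k : ℤ))) ((b + 1) * (L : ℝ) ^ (-(k : ℤ))) := by
  have hℓ : 0 < (L : ℝ) ^ (-(k : ℤ)) := by positivity
  refine ⟨⟨a, rfl⟩, ⟨b + 1, by push_cast; rfl⟩, ?_, fun m ham hmb => hrun m ?_ ?_, ?_, ?_⟩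
  · exact mul_lt_mul_of_pos_right (by exact_mod_cast Int.lt_add_one_of_le hab) hℓ
  · exact_mod_cast le_of_mul_le_mul_right ham hℓ
  · exact Int.lt_add_one_iff.1 (by exact_mod_cast lt_of_mul_lt_mul_right hmb hℓ.le)
  · simpa [gridCell, sub_mul] using ha
  · simpa [gridCell, add_mul] using hb

lemma measure_inter_Icc_eq_of_null_margins {μ : Measure ℝ} {S : Set ℝ} {c d w : ℝ}
    (hS : S ⊆ Icc (c - w) (d + w)) (hc : μ (Icc (c - w) c) = 0) (hd : μ (Icc d (d + w)) = 0) :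
    μ (S ∩ Icc c d) = μ S := by
  refine measure_inter_conull' (measure_mono_null ?_ (measure_union_null hc hd))
  intro z ⟨hzS, hz⟩
  obtain ⟨hz₁, hz₂⟩ := hS hzS
  rcases not_and_or.1 hz with h | h
  · exact Or.inl ⟨hz₁, (not_le.1 h).le⟩
  · exact Or.inr ⟨(not_le.1 h).le, hz₂⟩

lemma natCast_mul_le_measure_biUnion_closedBall (μ : Measure ℝ) {N : ℕ} {x : ℕ → ℝ} {r : ℝ}
    {m : ℝ≥0∞} (hsep : ∀ i j, i < j → j < N → x i + 2 * r < x j)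
    (hm : ∀ i < N, m ≤ μ (closedBall (x i) r)) :
    N * m ≤ μ (⋃ i ∈ Finset.range N, closedBall (x i) r) := by
  have hdisj : (Finset.range N : Set ℕ).PairwiseDisjoint fun i => closedBall (x i) r := by
    intro i hi j hj hij
    simp only [Finset.coe_range, mem_Iio] at hi hj
    apply closedBall_disjoint_closedBall
    rcases hij.lt_or_gt with h | h
    · rw [dist_comm, Real.dist_eq]; linarith [hsep i j h hj, le_abs_self (x j - x i)]
    · rw [Real.dist_eq]; linarith [hsep j i h hi, le_abs_self (x i - x j)]
  rw [measure_biUnion_finset hdisj fun _ _ => measurableSet_closedBall]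
  calc (N : ℝ≥0∞) * m = ∑ _i ∈ Finset.range N, m := by simp
    _ ≤ _ := Finset.sum_le_sum fun i hi => hm i (Finset.mem_range.1 hi)

lemma le_rpow_one_div_one_sub_of_le_mul_rpow {t K δ : ℝ} (ht : 0 < t) (hδ : δ < 1)
    (h : t ≤ K * t ^ δ) : t ≤ K ^ (1 / (1 - δ)) := by
  have hpow : t ^ (1 - δ) ≤ K := by
    rw [← mul_le_mul_iff_left₀ (Real.rpow_pos_of_pos ht δ), ← Real.rpow_add ht, sub_add_cancel,
      Real.rpow_one]
    exact h
  calc t = (t ^ (1 - δ)) ^ (1 / (1 - δ)) := by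
        rw [← Real.rpow_mul ht.le, mul_one_div_cancel (by linarith), Real.rpow_one]
    _ ≤ K ^ (1 / (1 - δ)) := by gcongr

lemma le_measure_Icc_of_run {X : Set ℝ} {μ : Measure ℝ} {δ C h ℓ : ℝ}
    (hreg : IsDeltaRegular X μ δ C h) (hC : 0 < C) (hsupp : μ Xᶜ = 0)
    (hℓ0 : 0 < ℓ) (hℓ1 : ℓ ≤ 1) (hhℓ : h ≤ ℓ) {a b : ℤ} (hab : a ≤ b)
    (hrun : ∀ j, a ≤ j → j ≤ b → 0 < μ (gridCell ℓ j))
    (ha : μ (gridCell ℓ (a - 1)) = 0) (hb : μ (gridCell ℓ (b + 1)) = 0) :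
    ENNReal.ofReal ((b + 1 - a) / 3 * (C⁻¹ * ℓ ^ δ)) ≤ μ (Icc (a * ℓ) ((b + 1) * ℓ)) := by
  have hpts : ∀ j, a ≤ j → j ≤ b → (gridCell ℓ j ∩ X).Nonempty := fun j h₁ h₂ =>
    nonempty_of_measure_ne_zero (by rw [measure_inter_conull hsupp]; exact (hrun j h₁ h₂).ne')
  choose! x hx using hpts
  -- one point of `X` in every third cell, so that the balls of radius `ℓ / 2` are disjoint
  set N := ((b - a) / 3).toNat + 1
  set p : ℕ → ℝ := fun i => x (a + 3 * i)
  have hp : ∀ i < N, p i ∈ X ∧ (a + 3 * i : ℝ) * ℓ ≤ p i ∧ p i ≤ (a + 3 * i + 1 : ℝ) * ℓ := by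
    intro i hi
    obtain ⟨⟨h₁, h₂⟩, hX⟩ := hx (a + 3 * i) (by omega) (by omega)
    push_cast at h₁ h₂
    exact ⟨hX, h₁, h₂⟩
  have hsep : ∀ i j, i < j → j < N → p i + 2 * (ℓ / 2) < p j := by
    intro i j hij hjN
    have hi := (hp i (hij.trans hjN)).2.2
    have hj := (hp j hjN).2.1
    have : (i : ℝ) + 1 ≤ j := by exact_mod_cast hij
    nlinarith
  have hball : ∀ i < N, ENNReal.ofReal (C⁻¹ * ℓ ^ δ) ≤ μ (closedBall (p i) (ℓ / 2)) := by
    intro i hi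
    have := hreg.2 _ (ℓ / 2) (hp i hi).1 (by linarith) (by linarith)
    rwa [mul_div_cancel₀ _ two_ne_zero, ← Real.closedBall_eq_Icc] at this
  have hsub : (⋃ i ∈ Finset.range N, closedBall (p i) (ℓ / 2)) ⊆
      Icc (a * ℓ - ℓ) ((b + 1) * ℓ + ℓ) := by
    simp only [iUnion_subset_iff, Finset.mem_range, Real.closedBall_eq_Icc]
    intro i hi
    obtain ⟨-, h₁, h₂⟩ := hp i hi
    have : (a + 3 * i + 1 : ℝ) ≤ b + 1 := by exact_mod_cast (by omega : a + 3 * (i : ℤ) + 1 ≤ b + 1)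
    have : (0 : ℝ) ≤ i := i.cast_nonneg
    exact Icc_subset_Icc (by nlinarith) (by nlinarith)
  have hN : (b + 1 - a : ℝ) / 3 ≤ N := by
    have : b + 1 - a ≤ 3 * (N : ℤ) := by omega
    rw [div_le_iff₀ three_pos, mul_comm]; exact_mod_cast this
  calc ENNReal.ofReal ((b + 1 - a) / 3 * (C⁻¹ * ℓ ^ δ))
      ≤ N * ENNReal.ofReal (C⁻¹ * ℓ ^ δ) := by
        rw [← ENNReal.ofReal_natCast, ← ENNReal.ofReal_mul (by positivity)]
        gcongr
    _ ≤ μ (⋃ i ∈ Finset.range N, closedBall (p i) (ℓ / 2)) :=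
        natCast_mul_le_measure_biUnion_closedBall μ hsep hball
    _ = μ ((⋃ i ∈ Finset.range N, closedBall (p i) (ℓ / 2)) ∩ Icc (a * ℓ) ((b + 1) * ℓ)) :=
        (measure_inter_Icc_eq_of_null_margins hsub (by simpa [gridCell, sub_mul] using ha)
          (by simpa [gridCell, add_mul] using hb)).symm
    _ ≤ μ (Icc (a * ℓ) ((b + 1) * ℓ)) := measure_mono inter_subset_right

noncomputable def runLengthBound (δ C : ℝ) : ℝ := (3 * C ^ 2) ^ (1 / (1 - δ))

lemma run_length_le {X : Set ℝ} {μ : Measure ℝ} {δ C h ℓ : ℝ}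
    (hreg : IsDeltaRegular X μ δ C h) (hδ1 : δ < 1) (hC : 0 < C) (hsupp : μ Xᶜ = 0)
    (hℓ0 : 0 < ℓ) (hℓ1 : ℓ ≤ 1) (hhℓ : h ≤ ℓ) {a b : ℤ} (hab : a ≤ b)
    (hrun : ∀ j, a ≤ j → j ≤ b → 0 < μ (gridCell ℓ j))
    (ha : μ (gridCell ℓ (a - 1)) = 0) (hb : μ (gridCell ℓ (b + 1)) = 0) :
    (b + 1 - a : ℝ) ≤ runLengthBound δ C := by
  set t : ℝ := b + 1 - a
  have ht : 1 ≤ t := by simp only [t]; linarith [(Int.cast_le (R := ℝ)).2 hab]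
  have hupper := hreg.1 (a * ℓ) ((b + 1) * ℓ) (by nlinarith)
  rw [show (b + 1 : ℝ) * ℓ - a * ℓ = t * ℓ by ring] at hupper
  have hmass := (le_measure_Icc_of_run hreg hC hsupp hℓ0 hℓ1 hhℓ hab hrun ha hb).trans hupper
  rw [ENNReal.ofReal_le_ofReal_iff (by positivity), Real.mul_rpow (by positivity) hℓ0.le] at hmass
  refine le_rpow_one_div_one_sub_of_le_mul_rpow (by positivity) hδ1 (le_of_mul_le_mul_right ?_
    (by positivity : 0 < C⁻¹ * ℓ ^ δ))
  calc t * (C⁻¹ * ℓ ^ δ) = 3 * (t / 3 * (C⁻¹ * ℓ ^ δ)) := by ring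
    _ ≤ 3 * (C * (t ^ δ * ℓ ^ δ)) := by gcongr
    _ = 3 * C ^ 2 * t ^ δ * (C⁻¹ * ℓ ^ δ) := by field_simp

lemma MemVk.exists_grid_succ {μ : Measure ℝ} {L k : ℕ} {c d : ℝ} (hL : 1 ≤ L)
    (hI : MemVk μ L k c d) :
    ∃ M N : ℤ, M < N ∧ c = M * (L : ℝ) ^ (-((k + 1 : ℕ) : ℤ)) ∧
      d = N * (L : ℝ) ^ (-((k + 1 : ℕ) : ℤ)) ∧
      μ (gridCell ((L : ℝ) ^ (-((k + 1 : ℕ) : ℤ))) (M - 1)) = 0 ∧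
      μ (gridCell ((L : ℝ) ^ (-((k + 1 : ℕ) : ℤ))) N) = 0 := by
  obtain ⟨⟨m, rfl⟩, ⟨n, rfl⟩, hmn, -, hleft, hright⟩ := hI
  set ℓ := (L : ℝ) ^ (-((k + 1 : ℕ) : ℤ)) with hℓ_def
  have hL1 : (1 : ℝ) ≤ L := by exact_mod_cast hL
  have hℓ : 0 < ℓ := by positivity
  have hΛ : (L : ℝ) ^ (-(k : ℤ)) = L * ℓ := by
    rw [hℓ_def, ← zpow_one_add₀ (by positivity)]
    congr 1
    push_cast
    ring
  have hℓΛ : ℓ ≤ L * ℓ := le_mul_of_one_le_left hℓ.le hL1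
  rw [hΛ] at hmn hleft hright ⊢
  refine ⟨m * L, n * L, ?_, by push_cast; ring, by push_cast; ring, ?_, ?_⟩
  · have : m < n := by exact_mod_cast lt_of_mul_lt_mul_right hmn (by positivity)
    exact Int.mul_lt_mul_of_pos_right this (by omega)
  · refine measure_mono_null (Icc_subset_Icc ?_ ?_) hleft <;> push_cast <;> nlinarith
  · refine measure_mono_null (Icc_subset_Icc ?_ ?_) hright <;> push_cast <;> nlinarith

lemma exists_memVk_inter_nonempty {X : Set ℝ} {μ : Measure ℝ} {δ C h : ℝ}
    (hreg : IsDeltaRegular X μ δ C h) (hδ1 : δ < 1) (hC : 0 < C) (hsupp : μ Xᶜ = 0)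
    {L k : ℕ} (hL : 0 < L) (hℓ1 : (L : ℝ) ^ (-(k : ℤ)) ≤ 1) (hhℓ : h ≤ (L : ℝ) ^ (-(k : ℤ)))
    {M N : ℤ} (hMN : M < N) (hM : μ (gridCell ((L : ℝ) ^ (-(k : ℤ))) (M - 1)) = 0)
    (hN : μ (gridCell ((L : ℝ) ^ (-(k : ℤ))) N) = 0) (S : Set ℝ)
    (hS : 0 < μ (S ∩ Icc (M * (L : ℝ) ^ (-(k : ℤ))) (N * (L : ℝ) ^ (-(k : ℤ))))) :
    ∃ c' d', MemVk μ L k c' d' ∧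
      Icc c' d' ⊆ Icc (M * (L : ℝ) ^ (-(k : ℤ))) (N * (L : ℝ) ^ (-(k : ℤ))) ∧
      d' - c' ≤ runLengthBound δ C * (L : ℝ) ^ (-(k : ℤ)) ∧ (S ∩ Icc c' d').Nonempty := by
  set ℓ := (L : ℝ) ^ (-(k : ℤ))
  have hℓ : 0 < ℓ := by positivity
  obtain ⟨j, hMj, hjN, hj⟩ := exists_gridCell_measure_inter_pos μ hℓ hMN hS
  obtain ⟨a, b, hMa, haj, hjb, hbN, hrun, ha, hb⟩ :=
    Int.exists_maximal_run (fun i => 0 < μ (gridCell ℓ i)) (A := M - 1) (B := N)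
      (hj.trans_le (measure_mono inter_subset_right)) (by simp [hM]) (by simp [hN]) (by omega) hjN
  replace ha := nonpos_iff_eq_zero.1 (not_lt.1 ha)
  replace hb := nonpos_iff_eq_zero.1 (not_lt.1 hb)
  have hjab : gridCell ℓ j ⊆ Icc (a * ℓ) ((b + 1) * ℓ) := by
    refine Icc_subset_Icc ?_ ?_ <;> gcongr
  refine ⟨a * ℓ, (b + 1) * ℓ, memVk_of_maximal_run μ hL k (haj.trans hjb) hrun ha hb, ?_, ?_,
    (nonempty_of_measure_ne_zero hj.ne').mono (inter_subset_inter_right S hjab)⟩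
  · refine Icc_subset_Icc ?_ ?_ <;> gcongr <;> exact_mod_cast (by omega)
  · rw [← sub_mul]
    gcongr
    exact run_length_le hreg hδ1 hC hsupp hℓ hℓ1 hhℓ (haj.trans hjb) hrun ha hb

lemma MemVk.measure_Icc_pos {μ : Measure ℝ} {L k : ℕ} {c d : ℝ} (hL : 0 < L)
    (hI : MemVk μ L k c d) : 0 < μ (Icc c d) := by
  obtain ⟨⟨m, rfl⟩, ⟨n, rfl⟩, hmn, hpos, -⟩ := hI
  have hΛ : 0 < (L : ℝ) ^ (-(k : ℤ)) := by positivity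
  have hmn' : (m + 1 : ℝ) ≤ n := by
    exact_mod_cast Int.add_one_le_of_lt (by exact_mod_cast lt_of_mul_lt_mul_right hmn hΛ.le)
  exact (hpos m le_rfl hmn).trans_le (measure_mono (Icc_subset_Icc le_rfl (by gcongr)))

lemma measure_closedBall_diff_closedBall_pos {X : Set ℝ} {μ : Measure ℝ} {δ C h : ℝ}
    (hreg : IsDeltaRegular X μ δ C h) (hδ : 0 < δ) (hC : 1 ≤ C) {x ρ : ℝ} (hx : x ∈ X)
    (hρ : 0 < ρ) (hhρ : h ≤ 4 / 3 * C ^ (-(2 / δ)) * ρ) (hρ1 : 3 * ρ ≤ 1) :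
    0 < μ (closedBall x (3 / 2 * ρ) \ closedBall x (2 / 3 * C ^ (-(2 / δ)) * ρ)) := by
  have hC0 : 0 < C := by linarith
  have hC₂ : C ^ (-(2 / δ)) ≤ 1 := Real.rpow_le_one_of_one_le_of_nonpos hC
    (neg_nonpos.2 (by positivity))
  have hC₂δ : (C ^ (-(2 / δ))) ^ δ = (C ^ 2)⁻¹ := by
    rw [← Real.rpow_mul hC0.le, neg_mul, div_mul_cancel₀ _ hδ.ne', Real.rpow_neg hC0.le,
      Real.rpow_two]
  have hlower := hreg.2 x (3 / 2 * ρ) hx (by nlinarith [hC₂]) (by linarith)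
  have hupper := hreg.1 (x - 2 / 3 * C ^ (-(2 / δ)) * ρ) (x + 2 / 3 * C ^ (-(2 / δ)) * ρ)
    (by linarith)
  -- the factor `C ^ (-(2 / δ))` absorbs the two factors `C` lost between the regularity bounds
  have hlt : C * (4 / 3 * C ^ (-(2 / δ)) * ρ) ^ δ < C⁻¹ * (3 * ρ) ^ δ := by
    rw [Real.mul_rpow (by positivity) hρ.le, Real.mul_rpow (by positivity) (by positivity),
      hC₂δ, Real.mul_rpow (by norm_num) hρ.le]
    have : (4 / 3 : ℝ) ^ δ < 3 ^ δ := Real.rpow_lt_rpow (by norm_num) (by norm_num) hδ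
    calc C * ((4 / 3) ^ δ * (C ^ 2)⁻¹ * ρ ^ δ) = C⁻¹ * ρ ^ δ * (4 / 3) ^ δ := by
          field_simp
      _ < C⁻¹ * ρ ^ δ * 3 ^ δ := by gcongr
      _ = C⁻¹ * (3 ^ δ * ρ ^ δ) := by ring
  rw [← Real.closedBall_eq_Icc, show 2 * (3 / 2 * ρ) = 3 * ρ by ring] at hlower
  rw [← Real.closedBall_eq_Icc, show x + 2 / 3 * C ^ (-(2 / δ)) * ρ -
    (x - 2 / 3 * C ^ (-(2 / δ)) * ρ) = 4 / 3 * C ^ (-(2 / δ)) * ρ by ring] at hupper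
  refine (tsub_pos_of_lt ?_).trans_le le_measure_sdiff
  exact hupper.trans_lt ((ENNReal.ofReal_lt_ofReal_iff (by positivity)).2 hlt |>.trans_le hlower)

lemma abs_abs_sub_sub_abs_sub_le {a b a' b' c' d' c'' d'' : ℝ} (ha : a ∈ Icc c' d')
    (ha' : a' ∈ Icc c' d') (hb : b ∈ Icc c'' d'') (hb' : b' ∈ Icc c'' d'') :
    |(|a' - b'| - |a - b|)| ≤ (d' - c') + (d'' - c'') := by
  calc |(|a' - b'| - |a - b|)| ≤ |(a' - b') - (a - b)| := abs_abs_sub_abs_le_abs_sub _ _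
    _ = |(a' - a) - (b' - b)| := by ring_nf
    _ ≤ |a' - a| + |b' - b| := abs_sub _ _
    _ ≤ (d' - c') + (d'' - c'') :=
        add_le_add (Real.dist_le_of_mem_Icc ha' ha) (Real.dist_le_of_mem_Icc hb' hb)

lemma one_le_runLengthBound {δ C : ℝ} (hδ1 : δ < 1) (hC : 1 ≤ C) : 1 ≤ runLengthBound δ C :=
  Real.one_le_rpow (by nlinarith) (div_nonneg zero_le_one (by linarith))

lemma twelve_mul_runLengthBound_le {δ C L : ℝ} (hδ0 : 0 < δ) (hδ1 : δ < 1) (hC : 1 ≤ C)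
    (hL : (4 * C) ^ (6 / (δ * (1 - δ))) ≤ L) :
    12 * runLengthBound δ C ≤ C ^ (-(2 / δ)) * L ^ (1 / 3 : ℝ) := by
  have hC0 : 0 < C := by linarith
  have h1δ : 0 < 1 - δ := by linarith
  have h12 : 12 * C ^ (2 / δ) ≤ (4 * C) ^ (2 / δ) := by
    rw [Real.mul_rpow (by norm_num) hC0.le]
    gcongr
    calc (12 : ℝ) ≤ 4 ^ (2 : ℝ) := by norm_num
      _ ≤ 4 ^ (2 / δ) := Real.rpow_le_rpow_of_exponent_le (by norm_num)
          ((le_div_iff₀ hδ0).2 (by linarith))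
  have hbound : runLengthBound δ C ≤ (4 * C) ^ (2 / (1 - δ)) := by
    rw [runLengthBound, show 2 / (1 - δ) = 2 * (1 / (1 - δ)) by ring,
      Real.rpow_mul (by positivity), Real.rpow_two]
    gcongr
    nlinarith
  have hsplit : (4 * C) ^ (2 / δ) * (4 * C) ^ (2 / (1 - δ)) ≤ L ^ (1 / 3 : ℝ) := by
    rw [← Real.rpow_add (by positivity), show 2 / δ + 2 / (1 - δ) = 6 / (δ * (1 - δ)) * (1 / 3) by
      field_simp; ring, Real.rpow_mul (by positivity)]
    gcongr
  have hinv : C ^ (2 / δ) * C ^ (-(2 / δ)) = 1 := by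
    rw [Real.rpow_neg hC0.le, mul_inv_cancel₀ (by positivity)]
  calc 12 * runLengthBound δ C = 12 * C ^ (2 / δ) * runLengthBound δ C * C ^ (-(2 / δ)) := by
        linear_combination (-(12 * runLengthBound δ C)) * hinv
    _ ≤ (4 * C) ^ (2 / δ) * (4 * C) ^ (2 / (1 - δ)) * C ^ (-(2 / δ)) := by
        gcongr
        · exact zero_le_one.trans (one_le_runLengthBound hδ1 hC)
    _ ≤ C ^ (-(2 / δ)) * L ^ (1 / 3 : ℝ) := by rw [mul_comm]; gcongr

lemma scale_bounds_of_large_base {δ C : ℝ} {L : ℕ} (hδ0 : 0 < δ) (hδ1 : δ < 1) (hC : 1 ≤ C)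
    (hL : (4 * C) ^ (6 / (δ * (1 - δ))) ≤ (L : ℝ)) (hL0 : 0 < L) (k : ℕ) :
    12 * runLengthBound δ C * (L : ℝ) ^ (-((k + 1 : ℕ) : ℤ)) ≤
      C ^ (-(2 / δ)) * (L : ℝ) ^ (-(k : ℝ) - 2 / 3) ∧
    3 * (L : ℝ) ^ (-(k : ℝ) - 2 / 3) ≤ (L : ℝ) ^ (-(k : ℤ)) := by
  have hL0' : (0 : ℝ) < L := by exact_mod_cast hL0
  have hu := twelve_mul_runLengthBound_le hδ0 hδ1 hC hL
  set u := (L : ℝ) ^ (1 / 3 : ℝ)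
  have hρ : (L : ℝ) ^ (-(k : ℝ) - 2 / 3) = u * (L : ℝ) ^ (-((k + 1 : ℕ) : ℤ)) := by
    rw [← Real.rpow_intCast, ← Real.rpow_add hL0']
    congr 1
    push_cast
    ring
  have hΛ : (L : ℝ) ^ (-(k : ℤ)) = u * u * (L : ℝ) ^ (-(k : ℝ) - 2 / 3) := by
    rw [← Real.rpow_intCast, ← Real.rpow_add hL0', ← Real.rpow_add hL0']
    congr 1
    push_cast
    ring
  have hC₂ : C ^ (-(2 / δ)) ≤ 1 := Real.rpow_le_one_of_one_le_of_nonpos hC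
    (neg_nonpos.2 (by positivity))
  have hu12 : 12 ≤ u := by nlinarith [one_le_runLengthBound hδ1 hC, (by positivity : 0 ≤ u)]
  constructor
  · rw [hρ, ← mul_assoc]
    gcongr
  · rw [hΛ]
    gcongr
    nlinarith

theorem stmt18_general (X : Set ℝ) (μX : Measure ℝ) (δ C_R : ℝ) (L K : ℕ)
    (hL : 2 ≤ L) (hδ0 : 0 < δ) (hδ1 : δ < 1) (hC : 1 ≤ C_R)
    (hsupp : μX Xᶜ = 0)
    (hreg : IsDeltaRegular X μX δ C_R ((L : ℝ) ^ (-(K : ℤ))))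
    (hLbig : (4 * C_R) ^ ((6 : ℝ) / (δ * (1 - δ))) ≤ (L : ℝ))
    (k : ℕ) (hk : k < K) (c d : ℝ) (hI : MemVk μX L k c d) :
    ∃ c' d' c'' d'' : ℝ,
      MemVk μX L (k + 1) c' d' ∧ MemVk μX L (k + 1) c'' d'' ∧
      Set.Icc c' d' ⊆ Set.Icc c d ∧ Set.Icc c'' d'' ⊆ Set.Icc c d ∧
      ∀ x' ∈ Set.Icc c' d', ∀ x'' ∈ Set.Icc c'' d'',
        (1 / 2) * C_R ^ (-(2 / δ)) * (L : ℝ) ^ (-(k : ℝ) - 2 / 3) ≤ |x' - x''| ∧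
        |x' - x''| ≤ 2 * (L : ℝ) ^ (-(k : ℝ) - 2 / 3) := by
  have hL1 : (1 : ℝ) ≤ L := by exact_mod_cast (by omega : 1 ≤ L)
  obtain ⟨hsep, hρΛ⟩ := scale_bounds_of_large_base hδ0 hδ1 hC hLbig (by omega) k
  set ℓ := (L : ℝ) ^ (-((k + 1 : ℕ) : ℤ))
  set ρ := (L : ℝ) ^ (-(k : ℝ) - 2 / 3)
  set Λ := (L : ℝ) ^ (-(k : ℤ))
  have hΛ1 : Λ ≤ 1 := zpow_le_one_of_nonpos₀ hL1 (by omega)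
  have hℓ1 : ℓ ≤ 1 := zpow_le_one_of_nonpos₀ hL1 (by omega)
  have hhℓ : (L : ℝ) ^ (-(K : ℤ)) ≤ ℓ := zpow_le_zpow_right₀ hL1 (by omega)
  have hC' := one_le_runLengthBound hδ1 hC
  have hC₂ : C_R ^ (-(2 / δ)) ≤ 1 := Real.rpow_le_one_of_one_le_of_nonpos hC
    (neg_nonpos.2 (by positivity))
  have hℓ0 : 0 < ℓ := by positivity
  have hρ0 : 0 < ρ := by positivity
  obtain ⟨M, N, hMN, rfl, rfl, hM, hN⟩ := hI.exists_grid_succ (by omega)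
  have hchild := exists_memVk_inter_nonempty hreg hδ1 (zero_lt_one.trans_le hC) hsupp (by omega)
    hℓ1 hhℓ hMN hM hN
  obtain ⟨c', d', hI', hsub', hlen', x₀, hx₀X, hx₀'⟩ := hchild X
    (by rw [inter_comm, measure_inter_conull hsupp]; exact hI.measure_Icc_pos (by omega))
  have hA := measure_closedBall_diff_closedBall_pos hreg hδ0 hC hx₀X hρ0 (by nlinarith)
    (by linarith)
  have hball : closedBall x₀ (3 / 2 * ρ) ⊆ Icc (M * ℓ - Λ) (N * ℓ + Λ) := by
    have hx₀ := hsub' hx₀'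
    rw [Real.closedBall_eq_Icc]
    exact Icc_subset_Icc (by linarith [hx₀.1]) (by linarith [hx₀.2])
  obtain ⟨c'', d'', hI'', hsub'', hlen'', y, ⟨hyr, hyr'⟩, hy''⟩ := hchild _ (by
    rwa [measure_inter_Icc_eq_of_null_margins (sdiff_subset.trans hball) hI.2.2.2.2.1
      hI.2.2.2.2.2])
  refine ⟨c', d', c'', d'', hI', hI'', hsub', hsub'', fun x' hx' x'' hx'' => ?_⟩
  have hdist := abs_le.1 (abs_abs_sub_sub_abs_sub_le hx₀' hx' hy'' hx'')
  rw [mem_closedBall, Real.dist_eq, abs_sub_comm] at hyr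
  rw [mem_closedBall, Real.dist_eq, abs_sub_comm, not_le] at hyr'
  constructor <;> nlinarith

theorem stmt18 (X : Set ℝ) (μX : Measure ℝ) (δ C_R : ℝ) (L K : ℕ)
    (hL : 2 ≤ L) (hK : 0 < K) (hδ0 : 0 < δ) (hδ1 : δ < 1) (hC : 1 ≤ C_R)
    (hX : IsCompact X) [IsFiniteMeasure μX] (hsupp : μX Xᶜ = 0)
    (hreg : IsDeltaRegular X μX δ C_R ((L : ℝ) ^ (-(K : ℤ))))
    (hLbig : (4 * C_R) ^ ((6 : ℝ) / (δ * (1 - δ))) ≤ (L : ℝ))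
    (k : ℕ) (hk : k < K) (c d : ℝ) (hI : MemVk μX L k c d) :
    ∃ c' d' c'' d'' : ℝ,
      MemVk μX L (k + 1) c' d' ∧ MemVk μX L (k + 1) c'' d'' ∧
      Set.Icc c' d' ⊆ Set.Icc c d ∧ Set.Icc c'' d'' ⊆ Set.Icc c d ∧
      ∀ x' ∈ Set.Icc c' d', ∀ x'' ∈ Set.Icc c'' d'',
        (1 / 2) * C_R ^ (-(2 / δ)) * (L : ℝ) ^ (-(k : ℝ) - 2 / 3) ≤ |x' - x''| ∧
        |x' - x''| ≤ 2 * (L : ℝ) ^ (-(k : ℝ) - 2 / 3) :=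
  stmt18_general X μX δ C_R L K hL hδ0 hδ1 hC hsupp hreg hLbig k hk c d hI
end
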